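/- Assume λ_{k_c+1} > 0 and λ_{k_r+1} > 0, let γ > 0, and set γ̄_c = γ/λ_{k_c+1}, γ̄_r = γ/λ_{k_r+1}. Let X̄ ∈ LR(P_{k_r}, Q_{k_c}), Ẽ ∈ ℝ^{ρ_r×ρ_c}, X̃ = M_r X̄ M_c + Ẽ, and let X* be a minimizer over X ∈ ℝ^{p×n} of F(X) = ‖M_r X M_c − X̃‖_F² + γ̄_c tr(X L_c X^⊤) + γ̄_r tr(X^⊤ L_r X). Then ‖M_r X* M_c − X̃‖_F² + γ̄_c λ_{k_c+1} ‖X* Q̄_{k_c}‖_F² + γ̄_r λ_{k_r+1} ‖P̄_{k_r}^⊤ X*‖_F² ≤ ‖Ẽ‖_F² + (γ̄_c λ_{k_c} + γ̄_r λ_{k_r}) ‖X̄‖_F². -/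

import Mathlib

/-! Compare the objective at the minimiser `X*` with its value at `X̄`, whose fit term is `‖Ẽ‖²`;
it remains to bound the two Laplacian terms. Writing `L = Q diag(λ) Qᵀ` gives
`tr (X L Xᵀ) = ∑ⱼ λⱼ ‖(X Q)_{:,j}‖²`. Dropping the first `k` terms, which are nonnegative since `L`
is positive semidefinite, bounds this below by `λ_{k+1} ‖X Q̄_k‖²`; when the rows of `X` lie in
`span Q_k` only those first `k` terms survive, which bounds it above by `λ_k ‖X‖²`. -/

open Matrix

/-- Frobenius norm of a real matrix. -/
noncomputable def frobNorm {m n : Type*} [Fintype m] [Fintype n] (A : Matrix m n ℝ) : ℝ :=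
  Real.sqrt (∑ i, ∑ j, (A i j) ^ 2)

/-- Euclidean norm of a real vector. -/
noncomputable def vecNorm {n : Type*} [Fintype n] (x : n → ℝ) : ℝ :=
  Real.sqrt (∑ i, (x i) ^ 2)

/-- A row-selection matrix: its rows are distinct standard basis vectors of `ℝ^p`. -/
def IsRowSelection {ρ p : ℕ} (M : Matrix (Fin ρ) (Fin p) ℝ) : Prop :=
  ∃ f : Fin ρ → Fin p, Function.Injective f ∧ ∀ i j, M i j = if j = f i then 1 else 0

/-- A column-selection matrix: its columns are distinct standard basis vectors of `ℝ^n`. -/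
def IsColSelection {n ρ : ℕ} (M : Matrix (Fin n) (Fin ρ) ℝ) : Prop :=
  ∃ f : Fin ρ → Fin n, Function.Injective f ∧ ∀ i j, M i j = if i = f j then 1 else 0

/-- `y` lies in the span of the columns of `P`. -/
def inColSpan {p k : ℕ} (P : Matrix (Fin p) (Fin k) ℝ) (y : Fin p → ℝ) : Prop :=
  ∃ c : Fin k → ℝ, y = P.mulVec c

/-- `Y ∈ LR(P, Q)`: every column of `Y` lies in the column span of `P` and every row of `Y`
lies in the column span of `Q`. -/
def memLR {p n kr kc : ℕ} (P : Matrix (Fin p) (Fin kr) ℝ) (Q : Matrix (Fin n) (Fin kc) ℝ)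
    (Y : Matrix (Fin p) (Fin n) ℝ) : Prop :=
  (∀ j, inColSpan P (fun i => Y i j)) ∧ (∀ i, inColSpan Q (fun j => Y i j))

/-- Graph cumulative coherence `ν = max_i √n ‖Q^⊤ e_i‖₂`. -/
noncomputable def coherence {n k : ℕ} (Q : Matrix (Fin n) (Fin k) ℝ) : ℝ :=
  ⨆ i : Fin n, Real.sqrt n * vecNorm (fun j => Q i j)

lemma Finset.sum_comp_le_univ_sum_of_injective {ι κ N : Type*} [Fintype ι] [Fintype κ]
    [AddCommMonoid N] [Preorder N] [AddLeftMono N] {f : κ → N} (hf : ∀ j, 0 ≤ f j)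
    {g : ι → κ} (hg : Function.Injective g) :
    ∑ t, f (g t) ≤ ∑ j, f j := by
  classical
  rw [← Finset.sum_image hg.injOn]
  exact Finset.sum_le_univ_sum_of_nonneg hf

section

variable {m n : Type*} [Fintype m] [Fintype n]

lemma frobNorm_sq (A : Matrix m n ℝ) : frobNorm A ^ 2 = ∑ i, ∑ j, A i j ^ 2 :=
  Real.sq_sqrt (by positivity)

lemma frobNorm_sq_eq_trace (A : Matrix m n ℝ) : frobNorm A ^ 2 = trace (A * Aᵀ) := by
  rw [frobNorm_sq]
  simp only [trace, diag_apply, mul_apply, transpose_apply, sq]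

lemma frobNorm_neg (A : Matrix m n ℝ) : frobNorm (-A) = frobNorm A := by
  simp [frobNorm]

lemma frobNorm_transpose (A : Matrix m n ℝ) : frobNorm Aᵀ = frobNorm A := by
  unfold frobNorm
  rw [Finset.sum_comm]
  rfl

lemma frobNorm_sq_mul_of_orthogonal [DecidableEq n] (X : Matrix m n ℝ) {Q : Matrix n n ℝ}
    (hQ : Qᵀ * Q = 1) : frobNorm (X * Q) ^ 2 = frobNorm X ^ 2 := by
  rw [frobNorm_sq_eq_trace, frobNorm_sq_eq_trace, transpose_mul, Matrix.mul_assoc,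
    ← Matrix.mul_assoc Q, mul_eq_one_comm.mp hQ, Matrix.one_mul]

variable [DecidableEq n] {L Q : Matrix n n ℝ} {ev : n → ℝ}

lemma trace_mul_mul_transpose_eq_sum_eigenvalues (hQ : Qᵀ * Q = 1)
    (hLQ : L * Q = Q * diagonal ev) (X : Matrix m n ℝ) :
    trace (X * L * Xᵀ) = ∑ j, ev j * ∑ i, (X * Q) i j ^ 2 := by
  have hL : L = Q * diagonal ev * Qᵀ := by
    rw [← hLQ, Matrix.mul_assoc, mul_eq_one_comm.mp hQ, Matrix.mul_one]
  have hXLX : X * L * Xᵀ = (X * Q) * diagonal ev * (X * Q)ᵀ := by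
    simp only [hL, transpose_mul, Matrix.mul_assoc]
  rw [hXLX]
  generalize X * Q = Y
  simp only [trace, diag_apply, mul_apply, transpose_apply, diagonal_apply, mul_ite, mul_zero,
    Finset.sum_ite_eq', Finset.mem_univ, if_true, Finset.mul_sum]
  rw [Finset.sum_comm]
  exact Finset.sum_congr rfl fun j _ => Finset.sum_congr rfl fun i _ => by ring

lemma eigenvalue_nonneg_of_posSemidef (hL : L.PosSemidef) (hQ : Qᵀ * Q = 1)
    (hLQ : L * Q = Q * diagonal ev) (j : n) : 0 ≤ ev j := by
  have hdiag : Qᵀ * L * Q = diagonal ev := by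
    rw [Matrix.mul_assoc, hLQ, ← Matrix.mul_assoc, hQ, Matrix.one_mul]
  have := hL.conjTranspose_mul_mul_same Q
  rw [conjTranspose_eq_transpose_of_trivial, hdiag, posSemidef_diagonal_iff] at this
  exact this j

end

section

variable {m : Type*} [Fintype m] {n : ℕ} {L Q : Matrix (Fin n) (Fin n) ℝ} {ev : Fin n → ℝ}

lemma vecMul_eq_zero_of_inColSpan_submatrix {k : ℕ} (hQ : Qᵀ * Q = 1) {f : Fin k → Fin n}
    {x : Fin n → ℝ} (hx : inColSpan (Q.submatrix id f) x) {j : Fin n} (hj : ∀ s, f s ≠ j) :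
    (x ᵥ* Q) j = 0 := by
  obtain ⟨c, rfl⟩ := hx
  have hQf : (Q.submatrix id f)ᵀ * Q = (1 : Matrix (Fin n) (Fin n) ℝ).submatrix f id := by
    rw [← hQ, transpose_submatrix]
    exact (submatrix_mul Qᵀ Q f id id Function.bijective_id).symm
  rw [← vecMul_transpose, vecMul_vecMul, hQf]
  change ∑ s, c s * (1 : Matrix (Fin n) (Fin n) ℝ) (f s) j = 0
  exact Finset.sum_eq_zero fun s _ => mul_eq_zero_of_right (c s) (one_apply_ne (hj s))

lemma eigenvalue_mul_frobNorm_sq_tail_le_trace (hL : L.PosSemidef) (hev : Monotone ev)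
    (hQ : Qᵀ * Q = 1) (hLQ : L * Q = Q * diagonal ev) {k : ℕ} (hk : k < n)
    (X : Matrix m (Fin n) ℝ) :
    ev ⟨k, hk⟩ * frobNorm (X * Q.submatrix id
      (fun t : Fin (n - k) => Fin.cast (by omega) (Fin.natAdd k t))) ^ 2 ≤
      trace (X * L * Xᵀ) := by
  set g : Fin (n - k) → Fin n := fun t => Fin.cast (by omega) (Fin.natAdd k t)
  have hg : Function.Injective g := fun s t h => by simpa [g, Fin.ext_iff] using h
  set c : Fin n → ℝ := fun j => ∑ i, (X * Q) i j ^ 2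
  have hcols : frobNorm (X * Q.submatrix id g) ^ 2 = ∑ t, c (g t) := by
    rw [frobNorm_sq, Finset.sum_comm]
    rfl
  rw [hcols, trace_mul_mul_transpose_eq_sum_eigenvalues hQ hLQ, Finset.mul_sum]
  calc ∑ t, ev ⟨k, hk⟩ * c (g t)
      ≤ ∑ t, ev (g t) * c (g t) := Finset.sum_le_sum fun t _ =>
        mul_le_mul_of_nonneg_right (hev (by simp [g, Fin.le_def])) (by positivity)
    _ ≤ ∑ j, ev j * c j := Finset.sum_comp_le_univ_sum_of_injective
        (fun j => mul_nonneg (eigenvalue_nonneg_of_posSemidef hL hQ hLQ j) (by positivity)) hg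

lemma trace_le_eigenvalue_mul_frobNorm_sq_of_inColSpan (hev : Monotone ev) (hQ : Qᵀ * Q = 1)
    (hLQ : L * Q = Q * diagonal ev) {k : ℕ} (hk : k < n) (X : Matrix m (Fin n) ℝ)
    (hX : ∀ i, inColSpan (Q.submatrix id (Fin.castLE hk.le)) (fun j => X i j)) :
    trace (X * L * Xᵀ) ≤ ev ⟨k - 1, by omega⟩ * frobNorm X ^ 2 := by
  have hzero : ∀ i (j : Fin n), k ≤ j → (X * Q) i j = 0 := fun i j hj =>
    vecMul_eq_zero_of_inColSpan_submatrix hQ (hX i) fun s h => by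
      subst h
      exact absurd hj (not_le.2 s.isLt)
  rw [trace_mul_mul_transpose_eq_sum_eigenvalues hQ hLQ, ← frobNorm_sq_mul_of_orthogonal X hQ,
    frobNorm_sq, Finset.sum_comm, Finset.mul_sum]
  refine Finset.sum_le_sum fun j _ => ?_
  by_cases hj : (j : ℕ) < k
  · exact mul_le_mul_of_nonneg_right (hev (Fin.le_def.2 (by simp only; omega))) (by positivity)
  · simp [hzero _ j (by omega)]

end

/-- The paper's 1-indexed eigenvalues `λ_{k_c}`, `λ_{k_c+1}` are `evc ⟨kc - 1, _⟩`, `evc ⟨kc, _⟩`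
(similarly for the rows). -/
theorem alternate_decoder_optimality_inequality
    (p n ρr ρc kr kc : ℕ) (hkr : kr < p) (hkc : kc < n)
    (Lr : Matrix (Fin p) (Fin p) ℝ) (Lc : Matrix (Fin n) (Fin n) ℝ)
    (hLr : Lr.PosSemidef) (hLc : Lc.PosSemidef)
    (evr : Fin p → ℝ) (evc : Fin n → ℝ) (hevr : Monotone evr) (hevc : Monotone evc)
    (P : Matrix (Fin p) (Fin p) ℝ) (Q : Matrix (Fin n) (Fin n) ℝ)
    (hPorth : Pᵀ * P = 1) (hQorth : Qᵀ * Q = 1)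
    (hLrP : Lr * P = P * Matrix.diagonal evr)
    (hLcQ : Lc * Q = Q * Matrix.diagonal evc)
    (Pkr : Matrix (Fin p) (Fin kr) ℝ) (hPkr : Pkr = P.submatrix id (Fin.castLE hkr.le))
    (Qkc : Matrix (Fin n) (Fin kc) ℝ) (hQkc : Qkc = Q.submatrix id (Fin.castLE hkc.le))
    (Pbar : Matrix (Fin p) (Fin (p - kr)) ℝ)
    (hPbar : Pbar = P.submatrix id
      (fun i : Fin (p - kr) => Fin.cast (by omega) (Fin.natAdd kr i)))
    (Qbar : Matrix (Fin n) (Fin (n - kc)) ℝ)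
    (hQbar : Qbar = Q.submatrix id
      (fun i : Fin (n - kc) => Fin.cast (by omega) (Fin.natAdd kc i)))
    (Mr : Matrix (Fin ρr) (Fin p) ℝ)
    (Mc : Matrix (Fin n) (Fin ρc) ℝ)
    (γ γc γr : ℝ) (hγ : 0 < γ)
    (hγc : γc = γ / evc ⟨kc, hkc⟩) (hγr : γr = γ / evr ⟨kr, hkr⟩)
    (Xbar : Matrix (Fin p) (Fin n) ℝ) (hXbar : memLR Pkr Qkc Xbar)
    (Etil : Matrix (Fin ρr) (Fin ρc) ℝ)
    (Xtil : Matrix (Fin ρr) (Fin ρc) ℝ) (hXtil : Xtil = Mr * Xbar * Mc + Etil)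
    (Xstar : Matrix (Fin p) (Fin n) ℝ)
    (hmin : ∀ X : Matrix (Fin p) (Fin n) ℝ,
      (frobNorm (Mr * Xstar * Mc - Xtil)) ^ 2 + γc * Matrix.trace (Xstar * Lc * Xstarᵀ)
        + γr * Matrix.trace (Xstarᵀ * Lr * Xstar) ≤
      (frobNorm (Mr * X * Mc - Xtil)) ^ 2 + γc * Matrix.trace (X * Lc * Xᵀ)
        + γr * Matrix.trace (Xᵀ * Lr * X)) :
    (frobNorm (Mr * Xstar * Mc - Xtil)) ^ 2
      + γc * evc ⟨kc, hkc⟩ * (frobNorm (Xstar * Qbar)) ^ 2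
      + γr * evr ⟨kr, hkr⟩ * (frobNorm (Pbarᵀ * Xstar)) ^ 2 ≤
    (frobNorm Etil) ^ 2
      + (γc * evc ⟨kc - 1, by omega⟩ + γr * evr ⟨kr - 1, by omega⟩)
        * (frobNorm Xbar) ^ 2 := by
  have hγc0 : 0 ≤ γc := hγc ▸ div_nonneg hγ.le (eigenvalue_nonneg_of_posSemidef hLc hQorth hLcQ _)
  have hγr0 : 0 ≤ γr := hγr ▸ div_nonneg hγ.le (eigenvalue_nonneg_of_posSemidef hLr hPorth hLrP _)
  have hfit : frobNorm (Mr * Xbar * Mc - Xtil) = frobNorm Etil := by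
    rw [hXtil, show Mr * Xbar * Mc - (Mr * Xbar * Mc + Etil) = -Etil by abel, frobNorm_neg]
  have lowC : evc ⟨kc, hkc⟩ * frobNorm (Xstar * Qbar) ^ 2 ≤ trace (Xstar * Lc * Xstarᵀ) :=
    hQbar ▸ eigenvalue_mul_frobNorm_sq_tail_le_trace hLc hevc hQorth hLcQ hkc Xstar
  have lowR : evr ⟨kr, hkr⟩ * frobNorm (Pbarᵀ * Xstar) ^ 2 ≤ trace (Xstarᵀ * Lr * Xstar) := by
    rw [← frobNorm_transpose, transpose_mul, transpose_transpose, hPbar]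
    simpa only [transpose_transpose] using
      eigenvalue_mul_frobNorm_sq_tail_le_trace hLr hevr hPorth hLrP hkr Xstarᵀ
  have upC : trace (Xbar * Lc * Xbarᵀ) ≤ evc ⟨kc - 1, by omega⟩ * frobNorm Xbar ^ 2 :=
    trace_le_eigenvalue_mul_frobNorm_sq_of_inColSpan hevc hQorth hLcQ hkc Xbar (hQkc ▸ hXbar.2)
  have upR : trace (Xbarᵀ * Lr * Xbar) ≤ evr ⟨kr - 1, by omega⟩ * frobNorm Xbar ^ 2 := by
    simpa only [transpose_transpose, frobNorm_transpose] using
      trace_le_eigenvalue_mul_frobNorm_sq_of_inColSpan hevr hPorth hLrP hkr Xbarᵀ (hPkr ▸ hXbar.1)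
  calc _ ≤ frobNorm (Mr * Xstar * Mc - Xtil) ^ 2 + γc * trace (Xstar * Lc * Xstarᵀ)
        + γr * trace (Xstarᵀ * Lr * Xstar) := by
          rw [mul_assoc γc, mul_assoc γr]
          gcongr
    _ ≤ frobNorm Etil ^ 2 + γc * trace (Xbar * Lc * Xbarᵀ) + γr * trace (Xbarᵀ * Lr * Xbar) :=
          hfit ▸ hmin Xbar
    _ ≤ frobNorm Etil ^ 2 + γc * (evc ⟨kc - 1, by omega⟩ * frobNorm Xbar ^ 2)
        + γr * (evr ⟨kr - 1, by omega⟩ * frobNorm Xbar ^ 2) := by gcongr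
    _ = _ := by ring
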